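/- arXiv:1312.6602 — 5 statements merged into one kernel-verified Lean document; each statement's English description precedes it below -/
import Mathlib

section
/- Let A ⊆ ℝ and let f : ℝ × ℝ → ℝ. Suppose f preserves quasi-Cauchy double sequences from A × A, i.e., for every double sequence z : ℕ → ℕ → ℝ × ℝ with values in A × A that is quasi-Cauchy (with respect to the Euclidean distance), the real double sequence (k,l) ↦ f(z k l) is quasi-Cauchy. Then f is continuous at every point L ∈ A × A relative to A × A, i.e., for every L ∈ A × A and every ε > 0 there exists δ > 0 such that for all (u,v) ∈ A × A with dist((u,v), L) < δ one has |f(u,v) − f(L)| < ε. -/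
/-! If `f` were discontinuous at `L` within `A × A`, there would be points `p n ∈ A × A`
converging to `L` with `|f (p n) - f L| ≥ ε`. Interlacing them with `L` gives a sequence
`s n` (`L` at even `n`, `p n` at odd `n`) that still converges to `L`, so `(k, l) ↦ s (k + l)`
is a quasi-Cauchy double sequence in `A × A`; but `f ∘ s` keeps jumping by at least `ε`. -/

/-- The Euclidean distance on `ℝ × ℝ`. -/
noncomputable def euclDist (p q : ℝ × ℝ) : ℝ :=
  Real.sqrt ((p.1 - q.1) ^ 2 + (p.2 - q.2) ^ 2)

/-- A double sequence in `ℝ × ℝ` is quasi-Cauchy (w.r.t. the Euclidean distance). -/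
def QuasiCauchyDouble2 (z : ℕ → ℕ → ℝ × ℝ) : Prop :=
  ∀ ε > (0 : ℝ), ∃ N : ℕ, ∀ k l : ℕ, N < k → N < l →
    euclDist (z k l) (z (k + 1) l) < ε ∧ euclDist (z k l) (z k (l + 1)) < ε ∧
      euclDist (z k l) (z (k + 1) (l + 1)) < ε

/-- A real double sequence is quasi-Cauchy. -/
def QuasiCauchyDoubleReal (y : ℕ → ℕ → ℝ) : Prop :=
  ∀ ε > (0 : ℝ), ∃ N : ℕ, ∀ k l : ℕ, N < k → N < l →
    |y k l - y (k + 1) l| < ε ∧ |y k l - y k (l + 1)| < ε ∧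
      |y k l - y (k + 1) (l + 1)| < ε

open Filter Topology

lemma euclDist_eq_dist (p q : ℝ × ℝ) :
    euclDist p q = dist (Complex.equivRealProd.symm p) (Complex.equivRealProd.symm q) := by
  simp [euclDist, Complex.dist_eq_re_im, Complex.equivRealProd_symm_apply]

lemma QuasiCauchyDouble2.of_cauchySeq {s : ℕ → ℝ × ℝ}
    (hs : CauchySeq fun n => Complex.equivRealProd.symm (s n)) :
    QuasiCauchyDouble2 fun k l => s (k + l) := by
  intro ε hε
  obtain ⟨N, hN⟩ := Metric.cauchySeq_iff.1 hs ε hε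
  refine ⟨N, fun k l hk _ => ?_⟩
  simp only [euclDist_eq_dist]
  exact ⟨hN _ (by omega) _ (by omega), hN _ (by omega) _ (by omega),
    hN _ (by omega) _ (by omega)⟩

lemma QuasiCauchyDoubleReal.eventually_abs_sub_succ_lt {g : ℕ → ℝ}
    (hg : QuasiCauchyDoubleReal fun k l => g (k + l)) {ε : ℝ} (hε : 0 < ε) :
    ∀ᶠ n in atTop, |g n - g (n + 1)| < ε := by
  obtain ⟨N, hN⟩ := hg ε hε
  filter_upwards [eventually_gt_atTop (2 * N + 1)] with n hn
  obtain ⟨k, rfl⟩ : ∃ k, n = k + (N + 1) := ⟨n - (N + 1), by omega⟩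
  simpa only [Nat.add_right_comm k 1] using (hN k (N + 1) (by omega) (by omega)).1

lemma tendsto_ite_even {X : Type*} [TopologicalSpace X] {p : ℕ → X} {a : X}
    (hp : Tendsto p atTop (𝓝 a)) :
    Tendsto (fun n => if Even n then a else p n) atTop (𝓝 a) :=
  tendsto_const_nhds.if (hp.mono_left inf_le_left)

/-- If `f : ℝ × ℝ → ℝ` preserves quasi-Cauchy double sequences from
`A × A`, then `f` is continuous at every point of `A × A` relative to `A × A`. -/
theorem quasiCauchy_preserving_implies_continuity
    (A : Set ℝ) (f : ℝ × ℝ → ℝ)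
    (hqc : ∀ z : ℕ → ℕ → ℝ × ℝ, (∀ k l, z k l ∈ A ×ˢ A) →
      QuasiCauchyDouble2 z → QuasiCauchyDoubleReal (fun k l => f (z k l))) :
    ∀ L ∈ A ×ˢ A, ∀ ε > (0 : ℝ), ∃ δ > (0 : ℝ),
      ∀ p ∈ A ×ˢ A, euclDist p L < δ → |f p - f L| < ε := by
  intro L hL ε hε
  by_contra! hdisc
  choose p hpA hpL hpf using fun n : ℕ => hdisc (1 / (n + 1)) Nat.one_div_pos_of_nat
  have hp : Tendsto (fun n => Complex.equivRealProd.symm (p n)) atTop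
      (𝓝 (Complex.equivRealProd.symm L)) :=
    tendsto_iff_dist_tendsto_zero.2 <| squeeze_zero (fun _ => dist_nonneg)
      (fun n => (euclDist_eq_dist _ _ ▸ hpL n).le) tendsto_one_div_add_atTop_nhds_zero_nat
  set s : ℕ → ℝ × ℝ := fun n => if Even n then L else p n with hs_def
  have hs : CauchySeq fun n => Complex.equivRealProd.symm (s n) := by
    simpa only [hs_def, apply_ite] using (tendsto_ite_even hp).cauchySeq
  have hsA : ∀ k l, s (k + l) ∈ A ×ˢ A := fun k l => by
    simp only [hs_def]; split_ifs; exacts [hL, hpA _]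
  obtain ⟨N, hN⟩ := eventually_atTop.1 <|
    (hqc _ hsA (.of_cauchySeq hs)).eventually_abs_sub_succ_lt (g := fun n => f (s n)) hε
  have hjump := hN (2 * N) (by omega)
  simp only [hs_def, even_two_mul, Nat.not_even_bit1, if_true, if_false] at hjump
  exact (hpf _).not_gt (abs_sub_comm (f L) _ ▸ hjump)
end

section
/- Let I ⊆ ℝ be a nonempty interval (an order-connected subset of ℝ) and let f : ℝ × ℝ → ℝ. Then f is uniformly continuous on I × I (for every ε > 0 there exists δ > 0 such that for all (u,v), (u',v') ∈ I × I with dist((u,v),(u',v')) < δ one has |f(u,v) − f(u',v')| < ε) if and only if f preserves quasi-Cauchy double sequences from I × I, i.e., for every double sequence z : ℕ → ℕ → ℝ × ℝ with values in I × I that is quasi-Cauchy (with respect to the Euclidean distance), the real double sequence (k,l) ↦ f(z k l) is quasi-Cauchy. -/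
/-!
If `f` is not uniformly continuous on `I × I`, there are pairs `p n, q n ∈ I × I` with
`dist (p n) (q n) < 1 / (n + 1)` but `ε ≤ |f (p n) - f (q n)|`. Walk through
`p 0, q 0, …, p 1, q 1, …, p 2, …`, crossing the segment from `q n` to `p (n + 1)` (which lies in
`I × I` by convexity) in steps of length at most `1 / (n + 1)`. The steps of this walk tend to `0`,
so it is a quasi-Cauchy double sequence (constant in the second index), while `f` jumps by at
least `ε` at each step from `p n` to `q n`.
-/

open Filter Topology Finset

section Concat

variable {X : Type*} {t : ℕ → ℕ}

lemma StrictMono.exists_mem_Ico_succ (ht : StrictMono t) (ht0 : t 0 = 0) (k : ℕ) :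
    ∃ n, k ∈ Set.Ico (t n) (t (n + 1)) := by
  induction k with
  | zero => exact ⟨0, ht0.le, ht0.symm.trans_lt (ht (Nat.lt_succ_self 0))⟩
  | succ k ih =>
    obtain ⟨n, hle, hlt⟩ := ih
    rcases (show k + 1 ≤ _ from hlt).lt_or_eq with h | h
    · exact ⟨n, by omega, h⟩
    · exact ⟨n + 1, h.ge, by rw [h]; exact ht (Nat.lt_succ_self _)⟩

lemma Monotone.eq_of_mem_Ico_succ (ht : Monotone t) {k n n' : ℕ}
    (h : k ∈ Set.Ico (t n) (t (n + 1))) (h' : k ∈ Set.Ico (t n') (t (n' + 1))) : n = n' := by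
  have key : ∀ {a b}, k ∈ Set.Ico (t a) (t (a + 1)) → k ∈ Set.Ico (t b) (t (b + 1)) → a ≤ b :=
    fun ha hb => by
      by_contra hab
      exact (hb.2.trans_le (ht (Nat.succ_le_of_lt (not_le.1 hab)))).not_ge ha.1
  exact le_antisymm (key h h') (key h' h)

/-- Concatenation of the blocks `c n 0, …, c n (L n - 1)`. Block `n` ends where block `n + 1`
starts, so every step of the concatenation is a step inside one block. -/
theorem exists_seq_concat_blocks {L : ℕ → ℕ} (hL : ∀ n, 0 < L n) (c : ℕ → ℕ → X)
    (hc : ∀ n, c n (L n) = c (n + 1) 0) :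
    ∃ x : ℕ → X, ∃ blk : ℕ → ℕ, Tendsto blk atTop atTop ∧
      (∀ k, ∃ i < L (blk k), x k = c (blk k) i ∧ x (k + 1) = c (blk k) (i + 1)) ∧
      ∀ n, ∃ k ≥ n, x k = c n 0 ∧ x (k + 1) = c n 1 := by
  obtain ⟨t, ht0, ht_succ⟩ : ∃ t : ℕ → ℕ, t 0 = 0 ∧ ∀ n, t (n + 1) = t n + L n :=
    ⟨fun n => ∑ j ∈ range n, L j, sum_range_zero _, fun n => sum_range_succ _ _⟩
  have ht : StrictMono t := strictMono_nat_of_lt_succ fun n => by have := hL n; rw [ht_succ]; omega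
  choose blk hblk using ht.exists_mem_Ico_succ ht0
  have blk_eq {k n : ℕ} (h : k ∈ Set.Ico (t n) (t (n + 1))) : blk k = n :=
    ht.monotone.eq_of_mem_Ico_succ (hblk k) h
  set x : ℕ → X := fun k => c (blk k) (k - t (blk k))
  have step (k : ℕ) :
      k - t (blk k) < L (blk k) ∧ x (k + 1) = c (blk k) (k - t (blk k) + 1) := by
    obtain ⟨hle, hlt⟩ := hblk k
    have hL_blk := ht_succ (blk k)
    refine ⟨by omega, ?_⟩
    rcases (show k + 1 ≤ _ from hlt).lt_or_eq with h | h
    · simp only [x, blk_eq (k := k + 1) ⟨by omega, h⟩]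
      congr 1
      omega
    · have hnext : blk (k + 1) = blk k + 1 :=
        blk_eq ⟨h.ge, by rw [h]; exact ht (Nat.lt_succ_self _)⟩
      simp only [x, hnext]
      rw [show k + 1 - t (blk k + 1) = 0 by omega, ← hc]
      congr 1
      omega
  refine ⟨x, blk, tendsto_atTop_atTop.2 fun N => ⟨t N, fun k hk => ?_⟩,
    fun k => ⟨_, (step k).1, rfl, (step k).2⟩, fun n => ?_⟩
  · by_contra! hlt
    exact (hk.trans_lt ((hblk k).2.trans_le (ht.monotone hlt))).false
  · have hn : blk (t n) = n := blk_eq ⟨le_rfl, ht (Nat.lt_succ_self n)⟩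
    refine ⟨t n, ht.le_apply, by simp [x, hn], ?_⟩
    simpa [hn] using (step (t n)).2

end Concat

section Bridge

variable {E : Type*} [SeminormedAddCommGroup E] [NormedSpace ℝ E]

lemma dist_lineMap_div_lineMap_succ_div (p q : E) (j m : ℕ) :
    dist (AffineMap.lineMap p q ((j : ℝ) / m)) (AffineMap.lineMap p q (((j + 1 : ℕ) : ℝ) / m)) =
      dist p q / m := by
  rw [dist_lineMap_lineMap, Real.dist_eq, Nat.cast_succ, add_div, sub_add_cancel_left, abs_neg,
    abs_of_nonneg (by positivity), one_div_mul_eq_div]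

theorem Convex.exists_seq_through_pairs {S : Set E} (hS : Convex ℝ S) {P Q : ℕ → E}
    (hP : ∀ n, P n ∈ S) (hQ : ∀ n, Q n ∈ S)
    (hPQ : Tendsto (fun n => dist (P n) (Q n)) atTop (𝓝 0)) :
    ∃ x : ℕ → E, (∀ k, x k ∈ S) ∧ Tendsto (fun k => dist (x k) (x (k + 1))) atTop (𝓝 0) ∧
      ∀ N, ∃ k ≥ N, ∃ n, x k = P n ∧ x (k + 1) = Q n := by
  -- block `n` is `P n, Q n`, then `m n` steps of length `≤ 1 / (n + 1)` from `Q n` to `P (n + 1)`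
  set m : ℕ → ℕ := fun n => ⌈dist (Q n) (P (n + 1)) * (n + 1)⌉₊ + 1
  set c : ℕ → ℕ → E := fun n i => match i with
    | 0 => P n
    | j + 1 => AffineMap.lineMap (Q n) (P (n + 1)) ((j : ℝ) / m n)
  have hm (n : ℕ) : (0 : ℝ) < m n := by positivity
  have hc (n : ℕ) : c n (m n + 1) = c (n + 1) 0 := by
    simp [c]
  have hcS (n i : ℕ) (hi : i < m n + 1) : c n i ∈ S := by
    rcases i with _ | j
    · exact hP n
    · refine hS.lineMap_mem (hQ n) (hP (n + 1)) ⟨by positivity, div_le_one_of_le₀ ?_ (hm n).le⟩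
      exact_mod_cast (by omega : j ≤ m n)
  set s : ℕ → ℝ := fun n => max (dist (P n) (Q n)) (1 / ((n : ℝ) + 1))
  have hcs (n i : ℕ) : dist (c n i) (c n (i + 1)) ≤ s n := by
    rcases i with _ | j
    · simp [c, s]
    · refine le_max_of_le_right ?_
      simp only [c]
      rw [dist_lineMap_div_lineMap_succ_div, div_le_div_iff₀ (hm n) (by positivity)]
      have hceil := Nat.le_ceil (dist (Q n) (P (n + 1)) * (n + 1))
      have : (⌈dist (Q n) (P (n + 1)) * (n + 1)⌉₊ : ℝ) ≤ m n := by simp [m]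
      linarith
  have hs : Tendsto s atTop (𝓝 0) := by
    simpa only [max_self] using hPQ.max tendsto_one_div_add_atTop_nhds_zero_nat
  obtain ⟨x, blk, hblk, hstep, hhit⟩ := exists_seq_concat_blocks (fun n => Nat.succ_pos (m n)) c hc
  refine ⟨x, fun k => ?_, squeeze_zero (fun _ => dist_nonneg) (fun k => ?_) (hs.comp hblk),
    fun N => ?_⟩
  · obtain ⟨i, hi, hx, -⟩ := hstep k
    exact hx ▸ hcS _ i hi
  · obtain ⟨i, hi, hx, hx'⟩ := hstep k
    exact hx ▸ hx' ▸ hcs _ i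
  · obtain ⟨k, hk, hx, hx'⟩ := hhit N
    exact ⟨k, hk, N, hx, by simpa [c] using hx'⟩

end Bridge

lemma euclDist_eq_dist_toLp (p q : ℝ × ℝ) :
    euclDist p q = dist (WithLp.toLp 2 p) (WithLp.toLp 2 q) := by
  simp [euclDist, WithLp.prod_dist_eq_of_L2, Real.dist_eq, sq_abs]

lemma quasiCauchyDouble2_of_tendsto_euclDist_succ {x : ℕ → ℝ × ℝ}
    (hx : Tendsto (fun k => euclDist (x k) (x (k + 1))) atTop (𝓝 0)) :
    QuasiCauchyDouble2 fun k _ => x k := by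
  intro ε hε
  obtain ⟨N, hN⟩ := (hx.eventually_lt_const hε).exists_forall_of_atTop
  exact ⟨N, fun k _ hk _ => ⟨hN k hk.le, by simpa [euclDist] using hε, hN k hk.le⟩⟩

theorem Convex.exists_seq_tendsto_euclDist_succ_of_not_uniform {S : Set (ℝ × ℝ)}
    (hS : Convex ℝ S) {f : ℝ × ℝ → ℝ} {ε : ℝ}
    (hbad : ∀ δ > 0, ∃ p ∈ S, ∃ q ∈ S, euclDist p q < δ ∧ ε ≤ |f p - f q|) :
    ∃ x : ℕ → ℝ × ℝ, (∀ k, x k ∈ S) ∧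
      Tendsto (fun k => euclDist (x k) (x (k + 1))) atTop (𝓝 0) ∧
      ∀ N, ∃ k ≥ N, ε ≤ |f (x k) - f (x (k + 1))| := by
  choose P hP Q hQ hPQ hf using fun n : ℕ => hbad (1 / ((n : ℝ) + 1)) Nat.one_div_pos_of_nat
  have hS' : Convex ℝ (WithLp.ofLp ⁻¹' S : Set (WithLp 2 (ℝ × ℝ))) :=
    hS.linear_preimage (WithLp.linearEquiv 2 ℝ (ℝ × ℝ)).toLinearMap
  have hPQ' : Tendsto (fun n => dist (WithLp.toLp 2 (P n)) (WithLp.toLp 2 (Q n))) atTop (𝓝 0) :=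
    squeeze_zero (fun _ => dist_nonneg) (fun n => (euclDist_eq_dist_toLp _ _ ▸ hPQ n).le)
      tendsto_one_div_add_atTop_nhds_zero_nat
  obtain ⟨x, hxS, hx, hxPQ⟩ := hS'.exists_seq_through_pairs hP hQ hPQ'
  refine ⟨fun k => (x k).ofLp, hxS, by simpa [euclDist_eq_dist_toLp] using hx, fun N => ?_⟩
  obtain ⟨k, hk, n, hkn, hkn'⟩ := hxPQ N
  exact ⟨k, hk, by simpa [hkn, hkn'] using hf n⟩

theorem uniformly_continuous_iff_preserves_quasiCauchy_general
    (I : Set ℝ) (hI : I.OrdConnected) (f : ℝ × ℝ → ℝ) :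
    (∀ ε > (0 : ℝ), ∃ δ > (0 : ℝ), ∀ p ∈ I ×ˢ I, ∀ q ∈ I ×ˢ I,
      euclDist p q < δ → |f p - f q| < ε) ↔
    (∀ z : ℕ → ℕ → ℝ × ℝ, (∀ k l, z k l ∈ I ×ˢ I) →
      QuasiCauchyDouble2 z → QuasiCauchyDoubleReal (fun k l => f (z k l))) := by
  constructor
  · intro hUC z hz hqc ε hε
    obtain ⟨δ, hδ, hfδ⟩ := hUC ε hε
    obtain ⟨N, hN⟩ := hqc δ hδ
    refine ⟨N, fun k l hk hl => ?_⟩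
    obtain ⟨h₁, h₂, h₃⟩ := hN k l hk hl
    exact ⟨hfδ _ (hz k l) _ (hz _ _) h₁, hfδ _ (hz k l) _ (hz _ _) h₂,
      hfδ _ (hz k l) _ (hz _ _) h₃⟩
  · intro hpres
    by_contra! hUC
    obtain ⟨ε, hε, hbad⟩ := hUC
    obtain ⟨x, hxI, hx, hfx⟩ :=
      (hI.convex.prod hI.convex).exists_seq_tendsto_euclDist_succ_of_not_uniform hbad
    obtain ⟨N, hN⟩ :=
      hpres _ (fun k _ => hxI k) (quasiCauchyDouble2_of_tendsto_euclDist_succ hx) ε hε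
    obtain ⟨k, hk, hfk⟩ := hfx (N + 1)
    exact (hN k k hk hk).1.not_ge hfk

/-- For a nonempty interval `I ⊆ ℝ`, a function `f : ℝ × ℝ → ℝ` is
uniformly continuous on `I × I` if and only if it preserves quasi-Cauchy double
sequences from `I × I`. -/
theorem uniformly_continuous_iff_preserves_quasiCauchy
    (I : Set ℝ) (hne : I.Nonempty) (hI : I.OrdConnected) (f : ℝ × ℝ → ℝ) :
    (∀ ε > (0 : ℝ), ∃ δ > (0 : ℝ), ∀ p ∈ I ×ˢ I, ∀ q ∈ I ×ˢ I,
      euclDist p q < δ → |f p - f q| < ε) ↔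
    (∀ z : ℕ → ℕ → ℝ × ℝ, (∀ k l, z k l ∈ I ×ˢ I) →
      QuasiCauchyDouble2 z → QuasiCauchyDoubleReal (fun k l => f (z k l))) :=
  uniformly_continuous_iff_preserves_quasiCauchy_general I hI f
end

section
/- Let A ⊆ ℝ and let f : ℝ × ℝ → ℝ be uniformly continuous on A × A, i.e., for every ε > 0 there exists δ > 0 such that for all (u,v), (u',v') ∈ A × A with dist((u,v),(u',v')) < δ one has |f(u,v) − f(u',v')| < ε. Then f preserves quasi-Cauchy double sequences from A × A: for every double sequence z : ℕ → ℕ → ℝ × ℝ with values in A × A that is quasi-Cauchy (with respect to the Euclidean distance), the real double sequence (k,l) ↦ f(z k l) is quasi-Cauchy. -/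
/-- A function uniformly continuous on `A × A` preserves quasi-Cauchy
double sequences from `A × A`. -/
theorem uniformly_continuous_preserves_quasiCauchy
    (A : Set ℝ) (f : ℝ × ℝ → ℝ)
    (huc : ∀ ε > (0 : ℝ), ∃ δ > (0 : ℝ), ∀ p ∈ A ×ˢ A, ∀ q ∈ A ×ˢ A,
      euclDist p q < δ → |f p - f q| < ε) :
    ∀ z : ℕ → ℕ → ℝ × ℝ, (∀ k l, z k l ∈ A ×ˢ A) →
      QuasiCauchyDouble2 z → QuasiCauchyDoubleReal (fun k l => f (z k l)) := by
  intro z hz hqc ε hε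
  obtain ⟨δ, hδ, hδf⟩ := huc ε hε
  obtain ⟨N, hN⟩ := hqc δ hδ
  refine ⟨N, fun k l hk hl => ?_⟩
  obtain ⟨hright, hup, hdiag⟩ := hN k l hk hl
  exact ⟨hδf _ (hz _ _) _ (hz _ _) hright, hδf _ (hz _ _) _ (hz _ _) hup,
    hδf _ (hz _ _) _ (hz _ _) hdiag⟩
end

section
/- Let I ⊆ ℝ be a nonempty bounded interval (a bounded order-connected subset of ℝ) and let f : ℝ × ℝ → ℝ. Then f is uniformly continuous on I × I (for every ε > 0 there exists δ > 0 such that for all (u,v), (u',v') ∈ I × I with dist((u,v),(u',v')) < δ one has |f(u,v) − f(u',v')| < ε) if and only if for every Cauchy double sequence z : ℕ → ℕ → ℝ × ℝ with values in I × I, the real double sequence (k,l) ↦ f(z k l) is quasi-Cauchy. -/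
/-- A double sequence in `ℝ × ℝ` is Cauchy (w.r.t. the Euclidean distance). -/
def CauchyDouble2 (z : ℕ → ℕ → ℝ × ℝ) : Prop :=
  ∀ ε > (0 : ℝ), ∃ N : ℕ, ∀ k l s t : ℕ, N < k → N < l → N < s → N < t →
    euclDist (z k l) (z s t) < ε

/-!
If `f` is uniformly continuous, consecutive terms of a Cauchy double sequence are eventually
close, hence so are their images. Conversely, if `f` is not uniformly continuous there are
points `p n, q n ∈ I × I` at distance `< 1 / (n + 1)` with `ε ≤ |f (p n) - f (q n)|`. By
Bolzano–Weierstrass a subsequence `p ∘ φ` converges, and then so does `q ∘ φ`, to the same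
limit. The double sequence whose even rows are `p ∘ φ` and whose odd rows are `q ∘ φ` is then
Cauchy, while its image jumps by at least `ε` between adjacent rows.
-/

open Filter Topology

lemma dist_le_euclDist (p q : ℝ × ℝ) : dist p q ≤ euclDist p q := by
  rw [Prod.dist_eq, Real.dist_eq, Real.dist_eq, euclDist]
  exact max_le (Real.abs_le_sqrt (by nlinarith)) (Real.abs_le_sqrt (by nlinarith))

lemma euclDist_le_two_mul_dist (p q : ℝ × ℝ) : euclDist p q ≤ 2 * dist p q := by
  have h₁ : |p.1 - q.1| ≤ dist p q := by rw [← Real.dist_eq, Prod.dist_eq]; exact le_max_left ..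
  have h₂ : |p.2 - q.2| ≤ dist p q := by rw [← Real.dist_eq, Prod.dist_eq]; exact le_max_right ..
  rw [euclDist, Real.sqrt_le_left (by positivity)]
  nlinarith [sq_abs (p.1 - q.1), sq_abs (p.2 - q.2), abs_nonneg (p.1 - q.1),
    abs_nonneg (p.2 - q.2)]

lemma CauchyDouble2.of_tendsto {z : ℕ → ℕ → ℝ × ℝ} {a : ℝ × ℝ}
    (h : Tendsto (Function.uncurry z) atTop (𝓝 a)) : CauchyDouble2 z := by
  intro ε hε
  obtain ⟨⟨N₁, N₂⟩, hN⟩ := Metric.tendsto_atTop.1 h (ε / 4) (by positivity)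
  refine ⟨max N₁ N₂, fun k l s t hk hl hs ht => ?_⟩
  have hkl : dist (z k l) a < ε / 4 := hN (k, l) ⟨by grind, by grind⟩
  have hst : dist (z s t) a < ε / 4 := hN (s, t) ⟨by grind, by grind⟩
  calc euclDist (z k l) (z s t) ≤ 2 * dist (z k l) (z s t) := euclDist_le_two_mul_dist _ _
    _ ≤ 2 * (dist (z k l) a + dist (z s t) a) := by gcongr; exact dist_triangle_right _ _ _
    _ < ε := by linarith

lemma CauchyDouble2.quasiCauchyDoubleReal_comp {s : Set (ℝ × ℝ)} {f : ℝ × ℝ → ℝ}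
    (hf : ∀ ε > (0 : ℝ), ∃ δ > (0 : ℝ), ∀ p ∈ s, ∀ q ∈ s, euclDist p q < δ → |f p - f q| < ε)
    {z : ℕ → ℕ → ℝ × ℝ} (hz : ∀ k l, z k l ∈ s) (hcz : CauchyDouble2 z) :
    QuasiCauchyDoubleReal (fun k l => f (z k l)) := by
  intro ε hε
  obtain ⟨δ, hδ, hfδ⟩ := hf ε hε
  obtain ⟨N, hN⟩ := hcz δ hδ
  have close : ∀ k l s t, N < k → N < l → N < s → N < t → |f (z k l) - f (z s t)| < ε :=
    fun k l s t hk hl hs ht => hfδ _ (hz k l) _ (hz s t) (hN k l s t hk hl hs ht)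
  exact ⟨N, fun k l hk hl => ⟨close _ _ _ _ hk hl (by omega) hl,
    close _ _ _ _ hk hl hk (by omega), close _ _ _ _ hk hl (by omega) (by omega)⟩⟩

lemma exists_strictMono_cauchyDouble2_interleave {s : Set (ℝ × ℝ)} (hs : Bornology.IsBounded s)
    {p q : ℕ → ℝ × ℝ} (hp : ∀ n, p n ∈ s)
    (hpq : Tendsto (fun n => dist (p n) (q n)) atTop (𝓝 0)) :
    ∃ φ : ℕ → ℕ, StrictMono φ ∧
      CauchyDouble2 (fun k l => if Even k then p (φ l) else q (φ l)) := by
  obtain ⟨a, -, φ, hφ, hpa⟩ := tendsto_subseq_of_bounded hs hp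
  have hqa : Tendsto (q ∘ φ) atTop (𝓝 a) := hpa.congr_dist (hpq.comp hφ.tendsto_atTop)
  have hsnd : Tendsto (Prod.snd : ℕ × ℕ → ℕ) atTop atTop := by
    rw [← prod_atTop_atTop_eq]; exact tendsto_snd
  refine ⟨φ, hφ, CauchyDouble2.of_tendsto (a := a) ?_⟩
  show Tendsto (fun x : ℕ × ℕ => if Even x.1 then p (φ x.2) else q (φ x.2)) atTop (𝓝 a)
  exact (hpa.comp hsnd).if' (hqa.comp hsnd)

theorem uniformly_continuous_iff_image_of_cauchy_is_quasiCauchy_general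
    (I : Set ℝ) (hbdd : Bornology.IsBounded I) (f : ℝ × ℝ → ℝ) :
    (∀ ε > (0 : ℝ), ∃ δ > (0 : ℝ), ∀ p ∈ I ×ˢ I, ∀ q ∈ I ×ˢ I,
      euclDist p q < δ → |f p - f q| < ε) ↔
    (∀ z : ℕ → ℕ → ℝ × ℝ, (∀ k l, z k l ∈ I ×ˢ I) →
      CauchyDouble2 z → QuasiCauchyDoubleReal (fun k l => f (z k l))) := by
  refine ⟨fun huc z hz hcz => CauchyDouble2.quasiCauchyDoubleReal_comp huc hz hcz, ?_⟩
  contrapose!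
  rintro ⟨ε, hε, hfar⟩
  choose p hp q hq hpq hfpq using fun n : ℕ => hfar (1 / (n + 1)) (by positivity)
  have hdist : Tendsto (fun n => dist (p n) (q n)) atTop (𝓝 0) :=
    squeeze_zero (fun _ => dist_nonneg)
      (fun n => (dist_le_euclDist _ _).trans (hpq n).le) tendsto_one_div_add_atTop_nhds_zero_nat
  obtain ⟨φ, -, hcz⟩ := exists_strictMono_cauchyDouble2_interleave (hbdd.prod hbdd) hp hdist
  refine ⟨_, fun k l => ?_, hcz, fun hqc => ?_⟩
  · split
    exacts [hp _, hq _]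
  obtain ⟨N, hN⟩ := hqc ε hε
  have hgap := (hN (2 * N + 2) (N + 1) (by omega) (by omega)).1
  simp only [show Even (2 * N + 2) by grind, show ¬Even (2 * N + 2 + 1) by grind,
    if_true, if_false] at hgap
  exact (hfpq _).not_gt hgap

/-- For a nonempty bounded interval `I ⊆ ℝ`, a function `f : ℝ × ℝ → ℝ`
is uniformly continuous on `I × I` if and only if the image under `f` of every Cauchy
double sequence in `I × I` is quasi-Cauchy. -/
theorem uniformly_continuous_iff_image_of_cauchy_is_quasiCauchy
    (I : Set ℝ) (hne : I.Nonempty) (hI : I.OrdConnected)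
    (hbdd : Bornology.IsBounded I) (f : ℝ × ℝ → ℝ) :
    (∀ ε > (0 : ℝ), ∃ δ > (0 : ℝ), ∀ p ∈ I ×ˢ I, ∀ q ∈ I ×ˢ I,
      euclDist p q < δ → |f p - f q| < ε) ↔
    (∀ z : ℕ → ℕ → ℝ × ℝ, (∀ k l, z k l ∈ I ×ˢ I) →
      CauchyDouble2 z → QuasiCauchyDoubleReal (fun k l => f (z k l))) :=
  uniformly_continuous_iff_image_of_cauchy_is_quasiCauchy_general I hbdd f
end

section
/- Let X be a metric space whose distance satisfies the ultrametric (strong triangle) inequality: dist(x, y) ≤ max (dist(x, z), dist(y, z)) for all x, y, z ∈ X. Then X is non-incremental: every quasi-Cauchy double sequence in X is a Cauchy double sequence. -/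
/-! In an ultrametric space a ball is re-centred at any of its points, so a walk whose steps are
shorter than `ε` never leaves the `ε`-ball around its starting point. Walking from `w (N+1) (N+1)`
first along a row and then along a column, every term with both indices beyond `N` lies in one
ball of radius `ε`, and two points of a ball of radius `ε` are closer than `ε`. -/

open Metric

section Ultrametric

variable {X : Type*} [PseudoMetricSpace X] [IsUltrametricDist X]

theorem IsUltrametricDist.mem_ball_of_forall_dist_succ_lt {f : ℕ → X} {ε : ℝ} (hε : 0 < ε)
    {a b : ℕ} (hab : a ≤ b) (hstep : ∀ n, a ≤ n → n < b → dist (f n) (f (n + 1)) < ε) :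
    f b ∈ ball (f a) ε := by
  induction b, hab using Nat.le_induction with
  | base => exact mem_ball_self hε
  | succ n han ih =>
    have hn : f n ∈ ball (f a) ε := ih fun m ham hmn => hstep m ham (by omega)
    rw [IsUltrametricDist.ball_eq_of_mem hn, mem_ball']
    exact hstep n han (Nat.lt_succ_self n)

theorem IsUltrametricDist.mem_ball_corner_of_dist_succ_lt {w : ℕ → ℕ → X} {ε : ℝ} (hε : 0 < ε)
    {N : ℕ}
    (hrow : ∀ k l, N < k → N < l → dist (w k l) (w (k + 1) l) < ε)
    (hcol : ∀ k l, N < k → N < l → dist (w k l) (w k (l + 1)) < ε)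
    {k l : ℕ} (hk : N < k) (hl : N < l) :
    w k l ∈ ball (w (N + 1) (N + 1)) ε := by
  have hrow' : w k (N + 1) ∈ ball (w (N + 1) (N + 1)) ε :=
    mem_ball_of_forall_dist_succ_lt (f := fun i => w i (N + 1)) hε hk
      fun n hn _ => hrow n (N + 1) hn (Nat.lt_succ_self N)
  have hcol' : w k l ∈ ball (w k (N + 1)) ε :=
    mem_ball_of_forall_dist_succ_lt (f := w k) hε hl fun n hn _ => hcol k n hk hn
  rwa [ball_eq_of_mem hrow']

end Ultrametric

/-- If the metric of `X` satisfies the ultrametric (strong triangle)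
inequality, then `X` is non-incremental: every quasi-Cauchy double sequence in `X`
is a Cauchy double sequence. -/
theorem ultrametric_is_non_incremental
    {X : Type*} [MetricSpace X]
    (hultra : ∀ x y z : X, dist x y ≤ max (dist x z) (dist y z)) :
    ∀ w : ℕ → ℕ → X,
      (∀ ε > (0 : ℝ), ∃ N : ℕ, ∀ k l : ℕ, N < k → N < l →
        dist (w k l) (w (k + 1) l) < ε ∧ dist (w k l) (w k (l + 1)) < ε ∧
          dist (w k l) (w (k + 1) (l + 1)) < ε) →
      (∀ ε > (0 : ℝ), ∃ N : ℕ, ∀ k l s t : ℕ, N < k → N < l → N < s → N < t →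
        dist (w k l) (w s t) < ε) := by
  have : IsUltrametricDist X := ⟨fun x y z => by simpa only [dist_comm z y] using hultra x z y⟩
  intro w hqc ε hε
  obtain ⟨N, hN⟩ := hqc ε hε
  have hcorner : ∀ k l, N < k → N < l → w k l ∈ ball (w (N + 1) (N + 1)) ε :=
    fun k l hk hl => IsUltrametricDist.mem_ball_corner_of_dist_succ_lt hε
      (fun k l hk hl => (hN k l hk hl).1) (fun k l hk hl => (hN k l hk hl).2.1) hk hl
  refine ⟨N, fun k l s t hk hl hs ht => ?_⟩
  have hst := hcorner s t hs ht
  rw [IsUltrametricDist.ball_eq_of_mem (hcorner k l hk hl)] at hst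
  exact mem_ball'.mp hst
end
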